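/- Let F: F_2^m → F_2^m be an APN permutation with m even. Then no nonzero component of F has algebraic degree 2. -/
import Mathlib


open scoped Classical

/-- Boolean functions on `m` bits. -/
abbrev BF (m : ℕ) := (Fin m → ZMod 2) → ZMod 2

/-- Vectorial Boolean functions on `m` bits. -/
abbrev VBF (m : ℕ) := (Fin m → ZMod 2) → (Fin m → ZMod 2)

/-- Derivative of a Boolean function in direction `a`. -/
def bDeriv {m : ℕ} (a : Fin m → ZMod 2) (f : BF m) : BF m := fun x => f (x + a) + f x

/-- Component of a vectorial Boolean function in direction `lam`. -/
def bComp {m : ℕ} (lam : Fin m → ZMod 2) (F : VBF m) : BF m := fun x => ∑ i, lam i * F x i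

/-- Fourier coefficient at 0:  `∑ x, (-1)^(f x)`. -/
def bFourier {m : ℕ} (f : BF m) : ℤ := ∑ x : Fin m → ZMod 2, (-1 : ℤ) ^ (f x).val

/-- A Boolean function is balanced if it takes the value 1 exactly `2^(m-1)` times. -/
def bBalanced {m : ℕ} (f : BF m) : Prop :=
  (Finset.univ.filter (fun x => f x = 1)).card = 2 ^ (m - 1)

/-- Almost Perfect Nonlinear: every derivative equation `F(x+a)+F(x)=b`, `a ≠ 0`,
has at most 2 solutions. -/
def bIsAPN {m : ℕ} (F : VBF m) : Prop :=
  ∀ a : Fin m → ZMod 2, a ≠ 0 → ∀ b : Fin m → ZMod 2,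
    (Finset.univ.filter (fun x => F (x + a) + F x = b)).card ≤ 2

/-- Bent: all nonzero derivatives are balanced. -/
def bBent {m : ℕ} (f : BF m) : Prop := ∀ a, a ≠ 0 → bBalanced (bDeriv a f)

/-- ANF coefficient of `f` at the monomial indexed by `S`. -/
def bAnfCoeff {m : ℕ} (f : BF m) (S : Finset (Fin m)) : ZMod 2 :=
  ∑ x : Fin m → ZMod 2, (∏ i ∈ Sᶜ, (1 + x i)) * f x

/-- Algebraic degree at most `d`. -/
def bDegLE {m : ℕ} (f : BF m) (d : ℕ) : Prop :=
  ∀ S : Finset (Fin m), d < S.card → bAnfCoeff f S = 0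

/-- Algebraic degree of a Boolean function. -/
noncomputable def bAlgDeg {m : ℕ} (f : BF m) : ℕ := sInf {d | bDegLE f d}

/-- The restriction of `f` to the subspace `V` is affine. -/
def bAffineOn {m : ℕ} (f : BF m) (V : Submodule (ZMod 2) (Fin m → ZMod 2)) : Prop :=
  ∀ x ∈ V, ∀ y ∈ V, ∀ z ∈ V, f (x + y + z) = f x + f y + f z

/-- The restriction of `f` to the subspace `U` is bent: every derivative in a nonzero
direction of `U` is balanced on `U`. -/
def bBentOn {m : ℕ} (f : BF m) (U : Submodule (ZMod 2) (Fin m → ZMod 2)) : Prop :=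
  ∀ a ∈ U, a ≠ 0 →
    2 * (Finset.univ.filter (fun x => x ∈ U ∧ f (x + a) + f x = 1)).card
      = (Finset.univ.filter (fun x => x ∈ U)).card

/-- Partially bent Boolean function. -/
def bPartiallyBent {m : ℕ} (f : BF m) : Prop :=
  ∃ V U : Submodule (ZMod 2) (Fin m → ZMod 2), IsCompl V U ∧ bAffineOn f V ∧ bBentOn f U

/-- `a` is a linear structure of `f`: the derivative `D_a f` is constant. -/
def bLinStruct {m : ℕ} (f : BF m) (a : Fin m → ZMod 2) : Prop :=
  ∃ c : ZMod 2, ∀ x, f (x + a) + f x = c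

/-- The set of directions in which the derivative of `f` is balanced. -/
noncomputable def bGamma {m : ℕ} (f : BF m) : Finset (Fin m → ZMod 2) :=
  Finset.univ.filter (fun a => bBalanced (bDeriv a f))

noncomputable def chi (v : ZMod 2) : ℤ := (-1)^v.val
lemma chi_add (u v : ZMod 2) : chi (u+v) = chi u * chi v := by revert u v; decide
lemma chi_zero : chi 0 = 1 := by decide
lemma chi_one : chi 1 = -1 := by decide
lemma vadd_self {m:ℕ} (v : Fin m → ZMod 2) : v + v = 0 := by
  funext i; have : ∀ a : ZMod 2, a + a = 0 := by decide
  exact this (v i)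
lemma pair_sum_zero {m:ℕ} (g : BF m) (t : Fin m → ZMod 2)
    (h : ∀ x, g (x+t) = g x + 1) : ∑ x, chi (g x) = 0 := by
  have h2 : ∑ x, chi (g x) = ∑ x, chi (g (x+t)) :=
    (Fintype.sum_equiv (Equiv.addRight t) _ _ (fun x => rfl)).symm
  have h3 : ∀ x : Fin m → ZMod 2, chi (g (x+t)) = - chi (g x) := by
    intro x; rw [h x, chi_add, chi_one]; ring
  simp only [h3, Finset.sum_neg_distrib] at h2
  linarith
lemma sq_sum {m:ℕ} (h : BF m) :
    (∑ x, chi (h x))^2 = ∑ a : Fin m → ZMod 2, ∑ x, chi (h (x+a) + h x) := by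
  have e1 : ∀ a x : Fin m → ZMod 2, chi (h (x+a) + h x) = chi (h (x+a)) * chi (h x) :=
    fun a x => chi_add _ _
  simp only [e1]
  rw [Finset.sum_comm]
  have e2 : ∀ x : Fin m → ZMod 2, ∑ a : Fin m → ZMod 2, chi (h (x+a)) * chi (h x)
      = (∑ b : Fin m → ZMod 2, chi (h b)) * chi (h x) := by
    intro x
    rw [← Finset.sum_mul]
    congr 1
    exact Fintype.sum_equiv (Equiv.addLeft x) _ _ (fun a => rfl)
  simp only [e2]
  rw [← Finset.mul_sum]
  ring

lemma delta_prod {m : ℕ} (x y : Fin m → ZMod 2) :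
    (∏ i, (x i + (1 + y i))) = if x = y then 1 else 0 := by
  by_cases h : x = y
  · subst h
    simp only [if_pos rfl]
    have : ∀ a : ZMod 2, a + (1 + a) = 1 := by decide
    simp [this]
  · simp only [if_neg h]
    have : ∃ i, x i ≠ y i := by
      by_contra hc; push_neg at hc; exact h (funext hc)
    obtain ⟨i, hi⟩ := this
    apply Finset.prod_eq_zero (Finset.mem_univ i)
    revert hi
    have : ∀ a b : ZMod 2, a ≠ b → a + (1 + b) = 0 := by decide
    exact this (x i) (y i)

lemma anf_expansion {m : ℕ} (f : BF m) (x : Fin m → ZMod 2) :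
    f x = ∑ S : Finset (Fin m), bAnfCoeff f S * ∏ i ∈ S, x i := by
  simp only [bAnfCoeff, Finset.sum_mul]
  rw [Finset.sum_comm]
  have key : ∀ y : Fin m → ZMod 2,
      (∑ S : Finset (Fin m), ((∏ i ∈ Sᶜ, (1 + y i)) * f y) * ∏ i ∈ S, x i)
      = f y * ∏ i, (x i + (1 + y i)) := by
    intro y
    rw [Finset.prod_add, ← Finset.powerset_univ, Finset.mul_sum]
    apply Finset.sum_congr rfl
    intro S _
    rw [← Finset.compl_eq_univ_sdiff]
    ring
  simp only [key, delta_prod]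
  simp

lemma eight_point {m : ℕ} (f : BF m) (hdeg : bDegLE f 2) (u v w : Fin m → ZMod 2) :
    f 0 + f u + f v + f w + f (u+v) + f (u+w) + f (v+w) + f (u+v+w) = 0 := by
  simp only [anf_expansion f]
  rw [← Finset.sum_add_distrib, ← Finset.sum_add_distrib, ← Finset.sum_add_distrib,
      ← Finset.sum_add_distrib, ← Finset.sum_add_distrib, ← Finset.sum_add_distrib,
      ← Finset.sum_add_distrib]
  apply Finset.sum_eq_zero
  intro S _
  by_cases h3 : 2 < S.card
  · rw [hdeg S h3]; ring
  · push_neg at h3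
    rw [← mul_add, ← mul_add, ← mul_add, ← mul_add, ← mul_add, ← mul_add, ← mul_add]
    apply mul_eq_zero_of_right
    interval_cases h : S.card
    · rw [Finset.card_eq_zero] at h
      subst h; simp; decide
    · rw [Finset.card_eq_one] at h
      obtain ⟨i, rfl⟩ := h
      simp only [Finset.prod_singleton, Pi.add_apply, Pi.zero_apply]
      have : ∀ a b c : ZMod 2, (0:ZMod 2) + a + b + c + (a+b) + (a+c) + (b+c) + (a+b+c) = 0 := by
        decide
      exact this (u i) (v i) (w i)
    · rw [Finset.card_eq_two] at h
      obtain ⟨i, j, hij, rfl⟩ := h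
      simp only [Finset.prod_pair hij, Pi.add_apply, Pi.zero_apply]
      have : ∀ a b c d e g : ZMod 2, (0:ZMod 2)*0 + a*d + b*e + c*g + (a+b)*(d+e) + (a+c)*(d+g)
          + (b+c)*(e+g) + (a+b+c)*(d+e+g) = 0 := by decide
      exact this (u i) (v i) (w i) (u j) (v j) (w j)

theorem stmt5 (m : ℕ) (hm : Even m) (F : VBF m) (hF : bIsAPN F)
    (hbij : Function.Bijective F) :
    ∀ lam : Fin m → ZMod 2, lam ≠ 0 → bAlgDeg (bComp lam F) ≠ 2 := by
  intro lam hlam h2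
  set f : BF m := bComp lam F with hfdef
  -- degree ≤ 2
  have hdeg : bDegLE f 2 := by
    have hne : {d | bDegLE f d}.Nonempty := by
      refine ⟨m, fun S hS => absurd hS ?_⟩
      push_neg
      simpa using Finset.card_le_card (Finset.subset_univ S)
    have := Nat.sInf_mem hne
    rwa [show sInf {d | bDegLE f d} = bAlgDeg f from rfl, h2] at this
  -- the linear form
  set L : (Fin m → ZMod 2) → ZMod 2 := fun y => ∑ i, lam i * y i with hLdef
  have hfL : ∀ x, f x = L (F x) := fun x => rfl
  have hLadd : ∀ y z, L (y + z) = L y + L z := by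
    intro y z
    simp only [hLdef, Pi.add_apply, mul_add]
    exact Finset.sum_add_distrib
  obtain ⟨j, hj⟩ : ∃ j, lam j = 1 := by
    by_contra hc; push_neg at hc
    apply hlam; funext i
    have h01 : ∀ z : ZMod 2, z = 0 ∨ z = 1 := by decide
    rcases h01 (lam i) with h | h
    · exact h
    · exact absurd h (hc i)
  set e : Fin m → ZMod 2 := Pi.single j 1 with hedef
  have hLe : L e = 1 := by
    simp only [hLdef, hedef, Pi.single_apply, mul_ite, mul_one, mul_zero,
      Finset.sum_ite_eq', Finset.mem_univ, if_true]
    exact hj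
  have hflip : ∀ y, L (y + e) = L y + 1 := by
    intro y; rw [hLadd, hLe]
  have h01 : ∀ z : ZMod 2, z = 0 ∨ z = 1 := by decide
  have hne01 : ∀ z w : ZMod 2, z ≠ w → z + w = 1 := by decide
  -- cardinality
  have hcard : Fintype.card (Fin m → ZMod 2) = 2^m := by
    simp [Fintype.card_fun]
  have zadd_self : ∀ z : ZMod 2, z + z = 0 := by decide
  -- m ≥ 1
  have hm1 : 1 ≤ m := by
    rcases Nat.eq_zero_or_pos m with h | h
    · exfalso; apply hlam; funext i; subst h; exact i.elim0
    · exact h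
  -- second derivative constancy
  have hB : ∀ a x t : Fin m → ZMod 2,
      f (x + t + a) + f (x + t) + (f (x + a) + f x) = f (t + a) + f t + (f a + f 0) := by
    intro a x t
    have h8 := eight_point f hdeg x t a
    revert h8
    have key : ∀ v0 v1 v2 v3 v4 v5 v6 v7 : ZMod 2,
        v0 + v1 + v2 + v3 + v4 + v5 + v6 + v7 = 0 →
        v7 + v4 + (v5 + v1) = v6 + v2 + (v3 + v0) := by decide
    exact key (f 0) (f x) (f t) (f a) (f (x+t)) (f (x+a)) (f (t+a)) (f (x+t+a))
  -- balancedness of nonconstant derivatives (with affine shift)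
  have hbal : ∀ (a : Fin m → ZMod 2) (s : ZMod 2), (∃ x1, f (x1 + a) + f x1 ≠ f (0 + a) + f 0) →
      ∑ x, chi ((f (x + a) + f x) + s) = 0 := by
    intro a s ⟨x1, hx1⟩
    apply pair_sum_zero (fun x => (f (x + a) + f x) + s) x1
    intro x
    have hb := hB a x x1
    have h1 : f (x1 + a) + f x1 + (f (0 + a) + f 0) = 1 := by
      have := hne01 _ _ hx1
      rcases h01 (f (x1+a) + f x1) with h | h <;> rcases h01 (f (0+a) + f 0) with h' | h' <;>
        rw [h, h'] at this ⊢ <;> first | rfl | (exfalso; revert this; decide)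
    rw [zero_add] at h1
    have hPQ := hb.trans h1
    -- hPQ : f (x+x1+a) + f (x+x1) + (f (x+a) + f x) = 1
    have key : ∀ p q r u t : ZMod 2, p + q + (r + u) = 1 →
        p + q + t = (r + u + t) + 1 := by decide
    exact key _ _ _ _ s hPQ
  -- Fourier coefficient of f is 0
  have hW0 : ∑ x, chi (f x) = 0 := by
    have : ∑ x, chi (f x) = ∑ y, chi (L y) := by
      exact Fintype.sum_bijective F hbij _ _ (fun x => rfl)
    rw [this]
    exact pair_sum_zero L e hflip
  -- sum over a=0 term
  have hT0 : ∀ g : BF m, (∀ x, g x = 0) → ∑ x, chi (g x) = (2:ℤ)^m := by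
    intro g hg
    simp only [hg, chi_zero, Finset.sum_const, hcard, smul_eq_mul, mul_one]
    rw [Finset.card_univ, hcard]
    norm_num
  -- no nonzero direction has derivative ≡ 0 (APN + bijectivity)
  have hnozero : ∀ a : Fin m → ZMod 2, a ≠ 0 → ¬ (∀ x, f (x + a) + f x = 0) := by
    intro a ha hzero
    have hg0 : ∀ x, L (F (x + a) + F x) = 0 := by
      intro x; rw [hLadd, ← hfL, ← hfL]; exact hzero x
    set Kfull : Finset (Fin m → ZMod 2) := Finset.univ.filter (fun b => L b = 0) with hKf
    have h0K : (0 : Fin m → ZMod 2) ∈ Kfull := by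
      simp only [hKf, Finset.mem_filter, Finset.mem_univ, true_and, hLdef]
      simp
    set K : Finset (Fin m → ZMod 2) := Kfull.erase 0 with hKdef
    have hKcard : K.card + 1 = Kfull.card := Finset.card_erase_add_one h0K
    -- Kfull has card 2^(m-1): 2*Kfull.card = 2^m
    set Kimg : Finset (Fin m → ZMod 2) := Kfull.image (· + e) with hKimg
    have hinj : Function.Injective (· + e : (Fin m → ZMod 2) → _) :=
      fun u v huv => by simpa [add_assoc, vadd_self, add_zero] using congrArg (· + e) huv
    have hKimgcard : Kimg.card = Kfull.card := Finset.card_image_of_injective _ hinj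
    have hdisj : Disjoint Kfull Kimg := by
      rw [Finset.disjoint_left]
      intro b hb hbi
      simp only [hKimg, Finset.mem_image] at hbi
      obtain ⟨k, hk, rfl⟩ := hbi
      simp only [hKf, Finset.mem_filter, Finset.mem_univ, true_and] at hb hk
      rw [hflip, hk] at hb
      exact absurd hb (by decide)
    have huniv : Kfull ∪ Kimg = Finset.univ := by
      apply Finset.eq_univ_of_forall
      intro b
      rw [Finset.mem_union]
      rcases h01 (L b) with h | h
      · exact Or.inl (by simp only [hKf, Finset.mem_filter, Finset.mem_univ, true_and]; exact h)
      · right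
        simp only [hKimg, Finset.mem_image]
        refine ⟨b + e, ?_, by rw [add_assoc, vadd_self, add_zero]⟩
        simp only [hKf, Finset.mem_filter, Finset.mem_univ, true_and]
        rw [hflip, h]; decide
    have hpart : Kfull.card + Kfull.card = 2^m := by
      have := congrArg Finset.card huniv
      rw [Finset.card_union_of_disjoint hdisj, Finset.card_univ, hcard, hKimgcard] at this
      exact this
    -- covering
    have hcover : (Finset.univ : Finset (Fin m → ZMod 2)) ⊆
        K.biUnion (fun b => Finset.univ.filter (fun x => F (x + a) + F x = b)) := by
      intro x _
      rw [Finset.mem_biUnion]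
      refine ⟨F (x + a) + F x, ?_, by simp⟩
      simp only [hKdef, Finset.mem_erase, hKf, Finset.mem_filter, Finset.mem_univ, true_and]
      constructor
      · intro hzero'
        have : F (x + a) = F x := by
          have := congrArg (· + F x) hzero'
          simpa [add_assoc, vadd_self] using this
        have hxa := hbij.1 this
        apply ha
        have : x + a = x + 0 := by rw [add_zero]; exact hxa
        exact add_left_cancel this
      · exact hg0 x
    have hle : (2:ℕ)^m ≤ 2 * K.card := by
      calc (2:ℕ)^m = (Finset.univ : Finset (Fin m → ZMod 2)).card := by
            rw [Finset.card_univ, hcard]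
        _ ≤ (K.biUnion (fun b => Finset.univ.filter (fun x => F (x + a) + F x = b))).card :=
            Finset.card_le_card hcover
        _ ≤ ∑ b ∈ K, (Finset.univ.filter (fun x => F (x + a) + F x = b)).card :=
            Finset.card_biUnion_le
        _ ≤ ∑ _b ∈ K, 2 := Finset.sum_le_sum (fun b _ => hF a ha b)
        _ = 2 * K.card := by rw [Finset.sum_const, smul_eq_mul, mul_comm]
    generalize hN : (2:ℕ)^m = N at hpart hle
    omega
  -- existence of a linear structure
  have hex : ∃ a : Fin m → ZMod 2, a ≠ 0 ∧ ∀ x, f (x + a) + f x = f (0 + a) + f 0 := by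
    by_contra hno
    push_neg at hno
    have hsum := sq_sum f
    rw [hW0] at hsum
    have : ∑ a : Fin m → ZMod 2, ∑ x, chi (f (x + a) + f x) = (2:ℤ)^m := by
      rw [Finset.sum_eq_single_of_mem 0 (Finset.mem_univ 0)]
      · apply hT0; intro x; rw [add_zero]; exact zadd_self (f x)
      · intro a _ ha
        obtain ⟨x1, hx1⟩ := hno a ha
        have := hbal a 0 ⟨x1, hx1⟩
        simpa using this
    rw [← hsum] at this
    simp at this
    exact absurd this.symm (by positivity)
  obtain ⟨a0, ha0, hc⟩ := hex
  rw [zero_add] at hc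
  -- the constant is 1
  have hc1 : ∀ x, f (x + a0) + f x = 1 := by
    rcases h01 (f a0 + f 0) with h | h
    · exfalso; exact hnozero a0 ha0 (fun x => by rw [hc x, h])
    · intro x; rw [hc x, h]
  -- pick coordinate of a0
  obtain ⟨j', hj'⟩ : ∃ j', a0 j' = 1 := by
    by_contra hcon; push_neg at hcon
    apply ha0; funext i
    rcases h01 (a0 i) with h | h
    · exact h
    · exact absurd h (hcon i)
  -- shifted function
  set g : BF m := fun x => f x + x j' with hgdef
  have hgD : ∀ a x, g (x + a) + g x = (f (x + a) + f x) + a j' := by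
    intro a x
    show (f (x+a) + (x j' + a j')) + (f x + x j') = (f (x+a) + f x) + a j'
    have k : ∀ p q r s : ZMod 2, (p + (r + s)) + (q + r) = (p + q) + s := by decide
    exact k _ _ _ _
  have hT : ∀ a : Fin m → ZMod 2, a ≠ 0 → a ≠ a0 → ∑ x, chi (g (x + a) + g x) = 0 := by
    intro a ha haa0
    simp only [hgD]
    by_cases hconst : ∀ x, f (x + a) + f x = f (0 + a) + f 0
    · exfalso
      rcases h01 (f (0 + a) + f 0) with h | h
      · exact hnozero a ha (fun x => by rw [hconst x, h])
      · -- derivative ≡ 1; then a + a0 has derivative ≡ 0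
        have haa : a + a0 ≠ 0 := by
          intro hz
          apply haa0
          have := congrArg (· + a0) hz
          simpa [add_assoc, vadd_self] using this
        apply hnozero (a + a0) haa
        intro x
        have h1 : f (x + a) + f x = 1 := by rw [hconst x, h]
        have h2 : f ((x + a) + a0) + f (x + a) = 1 := hc1 (x + a)
        have k : ∀ p q r : ZMod 2, p + q = 1 → q + r = 1 → p + r = 0 := by decide
        rw [← add_assoc]
        exact k _ _ _ h2 h1
    · push_neg at hconst
      exact hbal a (a j') hconst
  have hTa0 : ∑ x, chi (g (x + a0) + g x) = (2:ℤ)^m := by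
    apply hT0
    intro x
    rw [hgD, hc1 x, hj']; decide
  have hTz : ∑ x, chi (g (x + 0) + g x) = (2:ℤ)^m := by
    apply hT0
    intro x
    rw [hgD]
    rw [add_zero]
    show f x + f x + (0 : Fin m → ZMod 2) j' = 0
    rw [zadd_self (f x)]
    simp
  -- W^2 = 2^(m+1)
  have hWsq : (∑ x, chi (g x))^2 = (2:ℤ)^(m+1) := by
    rw [sq_sum g]
    rw [← Finset.sum_subset (Finset.subset_univ ({0, a0} : Finset (Fin m → ZMod 2)))]
    · rw [Finset.sum_pair (by exact fun h => ha0 h.symm)]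
      rw [hTz, hTa0]; ring
    · intro a _ ha
      simp only [Finset.mem_insert, Finset.mem_singleton] at ha
      push_neg at ha
      exact hT a ha.1 ha.2
  -- parity contradiction
  set W : ℤ := ∑ x, chi (g x) with hWdef
  have hnat : (W.natAbs)^2 = 2^(m+1) := by
    have := Int.natAbs_sq W
    have h2' : ((W.natAbs)^2 : ℤ) = ((2:ℕ)^(m+1) : ℤ) := by
      rw [this, hWsq]; push_cast; ring
    exact_mod_cast h2'
  have hfac := congrArg (fun n => n.factorization 2) hnat
  simp only [Nat.factorization_pow, Finsupp.smul_apply, smul_eq_mul] at hfac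
  have h2p : (2:ℕ).factorization 2 = 1 := Nat.Prime.factorization_self Nat.prime_two
  rw [h2p, mul_one] at hfac
  obtain ⟨k, hk⟩ := hm
  omega
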